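/- arXiv:2101.11968 — 4 statements merged into one kernel-verified Lean document; each statement's English description precedes it below -/
import Mathlib

section
/- For all n ≥ 1, the ratio of Hankel determinants H_n/G_n for the moment sequence b_j = 2^j(2j-1)!! equals 2^n · n! / (2n+1)!!. -/
/-!
Write `(a)ₖ` for the rising factorial. Then `2 ^ k * (2k-1)‼ = 4 ^ k * (1/2)ₖ`, so the `bₖ` are
the moments of a Gamma law. The Hankel matrix of `(a)_{i+j}` factors as `L D Lᵀ` with `L` lower
unitriangular, `L i k = C(i,k) (a+k)_{i-k}` and `D k = k! (a)ₖ` (the orthogonality of the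
Laguerre polynomials in disguise), so its determinant is `∏ k! (a)ₖ`, and the weight `4 ^ k`
contributes `∏ 4 ^ (2k)`. Shifting by two gives `b_{k+2} = 12 * 4 ^ k * (5/2)ₖ`, and the quotient
of the two products telescopes because `(1/2)_{k+2} = (3/4) (5/2)ₖ`.
-/

open Finset Polynomial Matrix
open scoped Nat

section Pochhammer

variable {R : Type*} [CommSemiring R]

theorem ascPochhammer_eval_add (a : R) (m n : ℕ) :
    (ascPochhammer R (m + n)).eval a =
      (ascPochhammer R m).eval a * (ascPochhammer R n).eval (a + m) := by
  rw [← ascPochhammer_mul, eval_mul, eval_comp]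
  simp

theorem ascPochhammer_succ_eval_add_one (a : R) (n : ℕ) :
    (ascPochhammer R (n + 1)).eval (a + 1) =
      (ascPochhammer R (n + 1)).eval a + (n + 1) * (ascPochhammer R n).eval (a + 1) := by
  simpa using congrArg (eval a) (ascPochhammer_succ_comp_X_add_one (S := R) n)

theorem ascPochhammer_eval_add_natCast (a : R) (i j : ℕ) :
    (ascPochhammer R j).eval (a + i) =
      ∑ k ∈ range (j + 1),
        (i.choose k * j.descFactorial k : R) * (ascPochhammer R (j - k)).eval (a + k) := by
  induction i generalizing a j with
  | zero => simp [sum_range_succ']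
  | succ i ih =>
    have pascal (k : ℕ) :
        ((i + 1).choose (k + 1) * j.descFactorial (k + 1) : R) *
            (ascPochhammer R (j - (k + 1))).eval (a + (k + 1 : ℕ)) =
          (i.choose (k + 1) * j.descFactorial (k + 1) : R) *
              (ascPochhammer R (j - (k + 1))).eval (a + (k + 1 : ℕ)) +
            (i.choose k * j.descFactorial (k + 1) : R) *
              (ascPochhammer R (j - (k + 1))).eval (a + (k + 1 : ℕ)) := by
      rw [Nat.choose_succ_succ']; push_cast; ring
    have ih_at_a : ∑ k ∈ range j, (i.choose (k + 1) * j.descFactorial (k + 1) : R) *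
            (ascPochhammer R (j - (k + 1))).eval (a + (k + 1 : ℕ)) +
          ((i + 1).choose 0 * j.descFactorial 0 : R) *
            (ascPochhammer R (j - 0)).eval (a + (0 : ℕ)) =
        (ascPochhammer R j).eval (a + i) := by
      rw [ih, sum_range_succ' _ j]; simp
    rw [sum_range_succ', sum_congr rfl fun k _ => pascal k, sum_add_distrib, add_right_comm,
      ih_at_a]
    cases j with
    | zero => simp
    | succ j =>
      have ih_at_a_add_one :
          ∑ k ∈ range (j + 1), (i.choose k * (j + 1).descFactorial (k + 1) : R) *
            (ascPochhammer R (j + 1 - (k + 1))).eval (a + (k + 1 : ℕ)) =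
          (j + 1) * (ascPochhammer R j).eval (a + 1 + i) := by
        rw [ih (a + 1) j, mul_sum]
        refine sum_congr rfl fun k _ => ?_
        rw [Nat.succ_descFactorial_succ, Nat.add_sub_add_right,
          show a + ((k + 1 : ℕ) : R) = a + 1 + k by push_cast; ring]
        push_cast; ring
      rw [ih_at_a_add_one, add_right_comm, Nat.cast_succ, ← add_assoc,
        ascPochhammer_succ_eval_add_one]

theorem sum_choose_mul_ascPochhammer_eval (a : R) {i j N : ℕ} (hj : j < N) :
    ∑ k ∈ range N, (i.choose k * (ascPochhammer R (i - k)).eval (a + k)) *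
        ((k ! : R) * (ascPochhammer R k).eval a) *
        (j.choose k * (ascPochhammer R (j - k)).eval (a + k)) =
      (ascPochhammer R (i + j)).eval a := by
  have term (k : ℕ) : (i.choose k * (ascPochhammer R (i - k)).eval (a + k)) *
        ((k ! : R) * (ascPochhammer R k).eval a) *
        (j.choose k * (ascPochhammer R (j - k)).eval (a + k)) =
      (ascPochhammer R i).eval a *
        ((i.choose k * j.descFactorial k : R) * (ascPochhammer R (j - k)).eval (a + k)) := by
    rcases le_or_gt k i with hki | hik
    · rw [← Nat.add_sub_cancel' hki, ascPochhammer_eval_add, Nat.add_sub_cancel_left,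
        Nat.descFactorial_eq_factorial_mul_choose]
      push_cast; ring
    · simp [Nat.choose_eq_zero_of_lt hik]
  have extend : ∑ k ∈ range (j + 1),
        (i.choose k * j.descFactorial k : R) * (ascPochhammer R (j - k)).eval (a + k) =
      ∑ k ∈ range N,
        (i.choose k * j.descFactorial k : R) * (ascPochhammer R (j - k)).eval (a + k) := by
    refine sum_subset (range_subset_range.mpr hj) fun k _ hk => ?_
    rw [mem_range, not_lt, Nat.succ_le_iff, ← Nat.descFactorial_eq_zero_iff_lt] at hk
    simp [hk]
  rw [sum_congr rfl fun k _ => term k, ← mul_sum, ← extend, ← ascPochhammer_eval_add_natCast,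
    ascPochhammer_eval_add]

end Pochhammer

section Hankel

variable {R : Type*} [CommRing R]

def Matrix.hankel (b : ℕ → R) (m : ℕ) : Matrix (Fin m) (Fin m) R :=
  of fun i j => b (i + j)

theorem det_hankel_pow_mul (c : R) (b : ℕ → R) (m : ℕ) :
    (hankel (fun k => c ^ k * b k) m).det =
      (∏ k ∈ range m, c ^ (2 * k)) * (hankel b m).det := by
  have hfactor : hankel (fun k => c ^ k * b k) m =
      diagonal (fun i : Fin m => c ^ (i : ℕ)) * hankel b m *
        diagonal (fun j : Fin m => c ^ (j : ℕ)) := by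
    ext i j
    simp only [hankel, pow_add, of_apply, mul_diagonal, diagonal_mul]
    ring
  rw [hfactor, det_mul, det_mul, det_diagonal,
    Fin.prod_univ_eq_prod_range (fun k => c ^ k), mul_right_comm, ← sq, ← prod_pow]
  simp_rw [← pow_mul, mul_comm]

noncomputable def ascPochhammerHankelFactor (a : R) (m : ℕ) : Matrix (Fin m) (Fin m) R :=
  of fun i k => (i.1.choose k : R) * (ascPochhammer R (i - k)).eval (a + k)

theorem det_ascPochhammerHankelFactor (a : R) (m : ℕ) :
    (ascPochhammerHankelFactor a m).det = 1 := by
  rw [det_of_isLowerTriangular]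
  · simp [ascPochhammerHankelFactor]
  · intro i k hik
    simp [ascPochhammerHankelFactor, Nat.choose_eq_zero_of_lt (show (i : ℕ) < k from hik)]

theorem hankel_ascPochhammer_eq_mul_diagonal_mul_transpose (a : R) (m : ℕ) :
    hankel (fun k => (ascPochhammer R k).eval a) m =
      ascPochhammerHankelFactor a m *
        diagonal (fun k : Fin m => (k ! : R) * (ascPochhammer R k).eval a) *
        (ascPochhammerHankelFactor a m)ᵀ := by
  ext i j
  rw [mul_apply, hankel, of_apply, ← sum_choose_mul_ascPochhammer_eval a j.2,
    ← Fin.sum_univ_eq_sum_range]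
  simp [ascPochhammerHankelFactor]

theorem det_hankel_ascPochhammer (a : R) (m : ℕ) :
    (hankel (fun k => (ascPochhammer R k).eval a) m).det =
      ∏ k ∈ range m, (k ! : R) * (ascPochhammer R k).eval a := by
  rw [hankel_ascPochhammer_eq_mul_diagonal_mul_transpose, det_mul, det_mul,
    det_transpose, det_ascPochhammerHankelFactor, det_diagonal,
    Fin.prod_univ_eq_prod_range (fun k => (k ! : R) * (ascPochhammer R k).eval a)]
  ring

theorem det_hankel_pow_mul_ascPochhammer (c a : R) (m : ℕ) :
    (hankel (fun k => c ^ k * (ascPochhammer R k).eval a) m).det =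
      ∏ k ∈ range m, c ^ (2 * k) * (k ! : R) * (ascPochhammer R k).eval a := by
  rw [det_hankel_pow_mul, det_hankel_ascPochhammer, ← prod_mul_distrib]
  simp_rw [mul_assoc]

end Hankel

section GaussianMoments

variable {K : Type*} [Field K] [CharZero K]

theorem natCast_two_pow_mul_doubleFactorial (k : ℕ) :
    ((2 ^ k * (2 * k - 1)‼ : ℕ) : K) = 4 ^ k * (ascPochhammer K k).eval (1 / 2) := by
  induction k with
  | zero => simp
  | succ k ih =>
    rw [show 2 * (k + 1) - 1 = 2 * k + 1 by omega, Nat.doubleFactorial_add_one,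
      ascPochhammer_succ_eval, pow_succ, pow_succ]
    push_cast at ih ⊢
    linear_combination (2 * (2 * k + 1) : K) * ih

theorem ascPochhammer_eval_half_add_two (k : ℕ) :
    (ascPochhammer K (k + 2)).eval (1 / 2) = 3 / 4 * (ascPochhammer K k).eval (5 / 2) := by
  rw [add_comm, ascPochhammer_eval_add]
  norm_num [ascPochhammer_succ_eval]

theorem natCast_two_pow_mul_doubleFactorial_add_two (k : ℕ) :
    ((2 ^ (k + 2) * (2 * (k + 2) - 1)‼ : ℕ) : K) =
      12 * (4 ^ k * (ascPochhammer K k).eval (5 / 2)) := by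
  rw [natCast_two_pow_mul_doubleFactorial, ascPochhammer_eval_half_add_two]
  ring

theorem prod_factorial_ascPochhammer_half_mul_doubleFactorial (n : ℕ) :
    (∏ k ∈ range (n + 1), 4 ^ (2 * k) * (k ! : K) * (ascPochhammer K k).eval (1 / 2)) *
        (2 * n + 1)‼ =
      24 ^ n * n ! *
        ∏ k ∈ range n, 4 ^ (2 * k) * (k ! : K) * (ascPochhammer K k).eval (5 / 2) := by
  set f : ℕ → K := fun k => 4 ^ (2 * k) * (k ! : K) * (ascPochhammer K k).eval (1 / 2)
  set g : ℕ → K := fun k => 4 ^ (2 * k) * (k ! : K) * (ascPochhammer K k).eval (5 / 2)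
  induction n with
  | zero => simp [f]
  | succ n ih =>
    have step : f (n + 1) * (2 * n + 3) = 24 * (n + 1) * g n := by
      have h := ascPochhammer_eval_half_add_two (K := K) n
      rw [ascPochhammer_succ_eval] at h
      simp only [f, g, Nat.factorial_succ]
      push_cast at h ⊢
      linear_combination (32 * 4 ^ (2 * n) * (n + 1) * n ! : K) * h
    rw [prod_range_succ f, prod_range_succ g,
      show 2 * (n + 1) + 1 = 2 * n + 1 + 2 by ring, Nat.doubleFactorial_add_two, Nat.factorial_succ]
    push_cast
    linear_combination
      (f (n + 1) * (2 * n + 3)) * ih + (24 ^ n * n ! * ∏ k ∈ range n, g k) * step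

end GaussianMoments

theorem hankel_ratio_gaussian_general (n : ℕ) :
    Matrix.det (Matrix.of fun i j : Fin (n + 1) =>
        ((2 ^ (i.1 + j.1) * Nat.doubleFactorial (2 * (i.1 + j.1) - 1) : ℕ) : ℝ)) /
      Matrix.det (Matrix.of fun i j : Fin n =>
        ((2 ^ (i.1 + 1 + (j.1 + 1)) *
          Nat.doubleFactorial (2 * (i.1 + 1 + (j.1 + 1)) - 1) : ℕ) : ℝ)) =
      2 ^ n * (Nat.factorial n : ℝ) / (Nat.doubleFactorial (2 * n + 1) : ℝ) := by
  have hH : (Matrix.of fun i j : Fin (n + 1) =>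
        ((2 ^ (i.1 + j.1) * Nat.doubleFactorial (2 * (i.1 + j.1) - 1) : ℕ) : ℝ)) =
      hankel (fun k => 4 ^ k * (ascPochhammer ℝ k).eval (1 / 2)) (n + 1) := by
    ext i j
    exact natCast_two_pow_mul_doubleFactorial _
  have hG : (Matrix.of fun i j : Fin n =>
        ((2 ^ (i.1 + 1 + (j.1 + 1)) *
          Nat.doubleFactorial (2 * (i.1 + 1 + (j.1 + 1)) - 1) : ℕ) : ℝ)) =
      (12 : ℝ) • hankel (fun k => 4 ^ k * (ascPochhammer ℝ k).eval (5 / 2)) n := by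
    ext i j
    rw [of_apply, show i.1 + 1 + (j.1 + 1) = i.1 + j.1 + 2 by ring,
      natCast_two_pow_mul_doubleFactorial_add_two]
    rfl
  have hG_pos :
      0 < ∏ k ∈ range n, 4 ^ (2 * k) * (k ! : ℝ) * (ascPochhammer ℝ k).eval (5 / 2) :=
    prod_pos fun k _ => by have := ascPochhammer_pos k (5 / 2 : ℝ) (by norm_num); positivity
  rw [hH, hG, det_smul, det_hankel_pow_mul_ascPochhammer, det_hankel_pow_mul_ascPochhammer,
    Fintype.card_fin, div_eq_div_iff (mul_pos (by positivity) hG_pos).ne' (by positivity),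
    prod_factorial_ascPochhammer_half_mul_doubleFactorial, show (24 : ℝ) ^ n = 2 ^ n * 12 ^ n by
      rw [← mul_pow]; norm_num]
  ring

theorem hankel_ratio_gaussian (n : ℕ) (hn : 1 ≤ n) :
    Matrix.det (Matrix.of fun i j : Fin (n + 1) =>
        ((2 ^ (i.1 + j.1) * Nat.doubleFactorial (2 * (i.1 + j.1) - 1) : ℕ) : ℝ)) /
      Matrix.det (Matrix.of fun i j : Fin n =>
        ((2 ^ (i.1 + 1 + (j.1 + 1)) *
          Nat.doubleFactorial (2 * (i.1 + 1 + (j.1 + 1)) - 1) : ℕ) : ℝ)) =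
      2 ^ n * (Nat.factorial n : ℝ) / (Nat.doubleFactorial (2 * n + 1) : ℝ) :=
  hankel_ratio_gaussian_general n
end

section
/- The sequence a_n = 2^n n!/(2n+1)!! satisfies a_n = (√π / (2√n)) · (1 + O(1/n)) as n → ∞; in particular, a_n · (2√n/√π) → 1 as n → ∞. -/
open Real Filter Finset

namespace RatioAsym

noncomputable def a (n : ℕ) : ℝ :=
  2 ^ n * (Nat.factorial n : ℝ) / (Nat.doubleFactorial (2 * n + 1) : ℝ)

lemma df_pos (n : ℕ) : (0 : ℝ) < (Nat.doubleFactorial (2 * n + 1) : ℝ) := by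
  exact_mod_cast Nat.doubleFactorial_pos _

lemma key (n : ℕ) :
    (2 ^ n * (Nat.factorial n : ℝ)) ^ 2 * (2 * n + 1) =
      Real.Wallis.W n * ((Nat.doubleFactorial (2 * n + 1) : ℝ)) ^ 2 := by
  induction n with
  | zero => simp [Real.Wallis.W, Nat.doubleFactorial]
  | succ n ih =>
    have hdf : Nat.doubleFactorial (2 * (n + 1) + 1)
        = (2 * n + 3) * Nat.doubleFactorial (2 * n + 1) := by
      have : 2 * (n + 1) + 1 = (2 * n + 1) + 2 := by ring
      rw [this, Nat.doubleFactorial_add_two]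
    rw [Real.Wallis.W_succ, hdf, Nat.factorial_succ]
    push_cast
    have h1 : (2 * (n : ℝ) + 1) ≠ 0 := by positivity
    have h3 : (2 * (n : ℝ) + 3) ≠ 0 := by positivity
    field_simp
    linear_combination (4 * (2 * (n : ℝ) + 3)) * ih

lemma a_sq (n : ℕ) : a n ^ 2 * (2 * n + 1) = Real.Wallis.W n := by
  have hdf := df_pos n
  have := key n
  rw [a, div_pow]
  field_simp
  linarith [this]

lemma bound (n : ℕ) (hn : 1 ≤ n) :
    |a n * (2 * Real.sqrt n / Real.sqrt Real.pi) - 1| ≤ 1 / n := by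
  set x := a n * (2 * Real.sqrt n / Real.sqrt Real.pi) with hx
  have hπ : (0 : ℝ) < Real.pi := Real.pi_pos
  have ha : 0 ≤ a n := by
    rw [a]; positivity
  have hx0 : 0 ≤ x := by
    rw [hx]; positivity
  have hxsq : x ^ 2 = a n ^ 2 * (4 * n / Real.pi) := by
    rw [hx]
    rw [mul_pow, div_pow, mul_pow, Real.sq_sqrt (Nat.cast_nonneg n),
      Real.sq_sqrt hπ.le]
    ring
  have hWle := Real.Wallis.W_le n
  have hleW := Real.Wallis.le_W n
  have haW := a_sq n
  have hn1 : (1 : ℝ) ≤ (n : ℝ) := by exact_mod_cast hn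
  -- upper bound x^2 ≤ 2n/(2n+1) ≤ 1
  have h2n1 : (0 : ℝ) < 2 * n + 1 := by positivity
  have h2n2 : (0 : ℝ) < 2 * n + 2 := by positivity
  have hup : x ^ 2 ≤ 1 := by
    have h1 : a n ^ 2 ≤ Real.pi / 2 / (2 * n + 1) := by
      rw [le_div_iff₀ h2n1]; linarith
    have heq : Real.pi / 2 / (2 * (n : ℝ) + 1) * (4 * n / Real.pi) = 2 * n / (2 * n + 1) := by
      field_simp; ring
    have h2 : (2 : ℝ) * n / (2 * n + 1) ≤ 1 := by
      rw [div_le_one h2n1]; linarith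
    rw [hxsq]
    calc a n ^ 2 * (4 * n / Real.pi) ≤ Real.pi / 2 / (2 * n + 1) * (4 * n / Real.pi) := by
          apply mul_le_mul_of_nonneg_right h1; positivity
      _ ≤ 1 := by rw [heq]; exact h2
  have hlow : (n : ℝ) / (n + 1) ≤ x ^ 2 := by
    have h1 : Real.pi / 2 * ((2 * n + 1) / (2 * n + 2)) / (2 * n + 1) ≤ a n ^ 2 := by
      rw [div_le_iff₀ h2n1]
      calc Real.pi / 2 * ((2 * (n : ℝ) + 1) / (2 * n + 2))
          = (2 * n + 1) / (2 * n + 2) * (Real.pi / 2) := by ring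
        _ ≤ Real.Wallis.W n := hleW
        _ = a n ^ 2 * (2 * n + 1) := haW.symm
    have heq : Real.pi / 2 * ((2 * (n : ℝ) + 1) / (2 * n + 2)) / (2 * n + 1) * (4 * n / Real.pi)
        = n / (n + 1) := by
      field_simp; ring
    rw [hxsq, ← heq]
    apply mul_le_mul_of_nonneg_right h1; positivity
  have hx1 : x ≤ 1 := by nlinarith
  have hn0 : (0 : ℝ) < n := by linarith
  rw [abs_sub_comm, abs_of_nonneg (by linarith)]
  -- 1 - x ≤ 1 - x^2 ≤ 1/(n+1) ≤ 1/n
  rw [le_div_iff₀ hn0]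
  have h1 : 1 - x ≤ 1 - x ^ 2 := by nlinarith
  have h2 : 1 - x ^ 2 ≤ 1 / (n + 1) := by
    have : (n : ℝ) / (n + 1) = 1 - 1 / (n + 1) := by field_simp; ring
    rw [this] at hlow; linarith
  calc (1 - x) * n ≤ (1 / (n + 1)) * n := by
        apply mul_le_mul_of_nonneg_right (le_trans h1 h2) hn0.le
    _ ≤ 1 := by rw [div_mul_eq_mul_div, div_le_one (by positivity)]; linarith

end RatioAsym

theorem ratio_asymptotics :
    (∃ C : ℝ, ∀ n : ℕ, 1 ≤ n →
      |(2 ^ n * (Nat.factorial n : ℝ) / (Nat.doubleFactorial (2 * n + 1) : ℝ)) *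
          (2 * Real.sqrt n / Real.sqrt Real.pi) - 1| ≤ C / n) ∧
    Filter.Tendsto (fun n : ℕ =>
        (2 ^ n * (Nat.factorial n : ℝ) / (Nat.doubleFactorial (2 * n + 1) : ℝ)) *
          (2 * Real.sqrt n / Real.sqrt Real.pi)) Filter.atTop (nhds 1) := by
  constructor
  · exact ⟨1, fun n hn => RatioAsym.bound n hn⟩
  · have h0 : Filter.Tendsto (fun n : ℕ =>
        (2 ^ n * (Nat.factorial n : ℝ) / (Nat.doubleFactorial (2 * n + 1) : ℝ)) *
          (2 * Real.sqrt n / Real.sqrt Real.pi) - 1) Filter.atTop (nhds 0) := by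
      refine squeeze_zero_norm' ?_ tendsto_one_div_atTop_nhds_zero_nat
      filter_upwards [Filter.eventually_ge_atTop 1] with n hn
      exact RatioAsym.bound n hn
    have := h0.add_const 1
    simpa using this
end

section
/- For the arcsine distribution on [-1,1], with even moments c_{2j} = binom(2j, j)/4^j, setting b_j = binom(2j,j)/4^j, the ratio of Hankel determinants H_n/G_n = det[(b_{i+j})_{i,j=0}^n] / det[(b_{i+j})_{i,j=1}^n] equals 1/(2n+1) for all n ≥ 1. -/
open Finset Matrix

lemma ha_split (a b : ℕ) :
    (2*a).choose a * (2*b).choose b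
      + 2 * ∑ k ∈ range (min a b), (2*a).choose (a-(k+1)) * (2*b).choose (b-(k+1))
    = (2*(a+b)).choose (a+b) := by
  have hV : (2*(a+b)).choose (a+b)
      = ∑ t ∈ range (a+b+1), (2*a).choose t * (2*b).choose (a+b-t) := by
    rw [show 2*(a+b) = 2*a + 2*b by ring, Nat.add_choose_eq]
    rw [Finset.Nat.sum_antidiagonal_eq_sum_range_succ_mk]
  have hsplit : ∑ t ∈ range (a+b+1), (2*a).choose t * (2*b).choose (a+b-t)
      = (∑ t ∈ range a, (2*a).choose t * (2*b).choose (a+b-t))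
        + ∑ t ∈ range (b+1), (2*a).choose (a+t) * (2*b).choose (a+b-(a+t)) := by
    rw [← Finset.sum_range_add_sum_Ico _ (by omega : a ≤ a+b+1)]
    congr 1
    rw [Finset.sum_Ico_eq_sum_range]
    apply Finset.sum_congr (by congr 1; omega) (fun t _ => rfl)
  have hW1 : (∑ t ∈ range a, (2*a).choose t * (2*b).choose (a+b-t))
      = ∑ k ∈ range (min a b), (2*a).choose (a-(k+1)) * (2*b).choose (b-(k+1)) := by
    rw [← Finset.sum_range_reflect]
    rw [← Finset.sum_subset (Finset.range_subset_range.2 (by omega : min a b ≤ a))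
      (fun k hk hk' => by
        simp only [Finset.mem_range] at hk hk'
        have : 2*b < a + b - (a - 1 - k) := by omega
        rw [Nat.choose_eq_zero_of_lt this, mul_zero])]
    apply Finset.sum_congr rfl
    intro k hk
    simp only [Finset.mem_range] at hk
    have hka : k < a := by omega
    have hkb : k < b := by omega
    have h1 : a - 1 - k = a - (k+1) := by omega
    have h2 : a + b - (a - (k+1)) = b + 1 + k := by omega
    rw [h1, h2]
    congr 1
    rw [← Nat.choose_symm (by omega : b+1+k ≤ 2*b)]
    congr 1
    omega
  have hW2 : (∑ t ∈ range (b+1), (2*a).choose (a+t) * (2*b).choose (a+b-(a+t)))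
      = (2*a).choose a * (2*b).choose b
        + ∑ k ∈ range (min a b), (2*a).choose (a-(k+1)) * (2*b).choose (b-(k+1)) := by
    rw [Finset.sum_range_succ']
    rw [add_comm]
    congr 1
    · congr 1
      · congr 1; omega
    · rw [← Finset.sum_subset (Finset.range_subset_range.2 (by omega : min a b ≤ b))
        (fun k hk hk' => by
          simp only [Finset.mem_range] at hk hk'
          have : 2*a < a + (k+1) := by omega
          rw [Nat.choose_eq_zero_of_lt this, zero_mul])]
      apply Finset.sum_congr rfl
      intro k hk
      simp only [Finset.mem_range] at hk
      have hka : k < a := by omega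
      have hkb : k < b := by omega
      have h2 : a + b - (a + (k+1)) = b - (k+1) := by omega
      rw [h2]
      congr 1
      rw [← Nat.choose_symm (by omega : a+(k+1) ≤ 2*a)]
      congr 1
      omega
  rw [hV, hsplit, hW1, hW2]
  ring

lemma ha_entry_nat (n a b : ℕ) (ha : a ≤ n) (hb : b ≤ n) :
    ∑ k ∈ range (n+1), (if k ≤ a ∧ k ≤ b
      then (if k = 0 then 1 else 2) * ((2*a).choose (a-k) * (2*b).choose (b-k)) else 0)
    = (2*(a+b)).choose (a+b) := by
  rw [← Finset.sum_subset (Finset.range_subset_range.2 (by omega : min a b + 1 ≤ n+1))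
    (fun k hk hk' => by
      simp only [Finset.mem_range] at hk hk'
      rw [if_neg (by omega)])]
  rw [Finset.sum_congr rfl (fun k hk => by
    simp only [Finset.mem_range] at hk
    rw [if_pos (by omega : k ≤ a ∧ k ≤ b)])]
  rw [Finset.sum_range_succ']
  simp only [if_pos rfl, Nat.sub_zero, if_neg (Nat.succ_ne_zero _)]
  rw [← ha_split a b]
  rw [Finset.mul_sum]
  simp only [if_true]
  ring

noncomputable def haL (n : ℕ) : Matrix (Fin (n+1)) (Fin (n+1)) ℝ :=
  Matrix.of fun i k =>
    if (k:ℕ) ≤ (i:ℕ) then ((2*(i:ℕ)).choose ((i:ℕ)-(k:ℕ)) : ℝ) * 4^(k:ℕ) / 4^(i:ℕ) else 0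

noncomputable def haD (n : ℕ) : Matrix (Fin (n+1)) (Fin (n+1)) ℝ :=
  Matrix.diagonal fun k => if (k:ℕ) = 0 then 1 else 2 / 16^(k:ℕ)

noncomputable def haDinv (n : ℕ) : Matrix (Fin (n+1)) (Fin (n+1)) ℝ :=
  Matrix.diagonal fun k => if (k:ℕ) = 0 then 1 else 16^(k:ℕ) / 2

noncomputable def haE (n : ℕ) : Matrix (Fin (n+1)) (Fin (n+1)) ℝ :=
  Matrix.of fun i k =>
    if (i:ℕ) = 0 then (if (k:ℕ) = 0 then 1 else 0)
    else if (k:ℕ) ≤ (i:ℕ) then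
      (-1)^((i:ℕ)-(k:ℕ)) * (((i:ℕ):ℝ)/(((i:ℕ):ℝ)+((k:ℕ):ℝ)))
        * (((i:ℕ)+(k:ℕ)).choose (2*(k:ℕ)) : ℝ) * 4^(k:ℕ) * 2 / 4^(i:ℕ)
    else 0

lemma ha_fact (n : ℕ) :
    (Matrix.of fun i j : Fin (n+1) =>
      ((Nat.choose (2*((i:ℕ)+(j:ℕ))) ((i:ℕ)+(j:ℕ)) : ℝ) / 4^((i:ℕ)+(j:ℕ))))
    = haL n * haD n * (haL n)ᵀ := by
  ext i j
  have hterm : ∀ k : Fin (n+1), (haL n * haD n) i k * (haL n)ᵀ k j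
      = ((if (k:ℕ) ≤ (i:ℕ) ∧ (k:ℕ) ≤ (j:ℕ)
          then (if (k:ℕ) = 0 then 1 else 2) *
            ((2*(i:ℕ)).choose ((i:ℕ)-(k:ℕ)) * (2*(j:ℕ)).choose ((j:ℕ)-(k:ℕ))) else 0 : ℕ) : ℝ)
        / 4^((i:ℕ)+(j:ℕ)) := by
    intro k
    rw [haD, Matrix.mul_diagonal, Matrix.transpose_apply]
    simp only [haL, haD, Matrix.of_apply]
    have h4 : (4:ℝ)^(i:ℕ) ≠ 0 := by positivity
    have h4' : (4:ℝ)^(j:ℕ) ≠ 0 := by positivity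
    have h16 : (16:ℝ)^(k:ℕ) ≠ 0 := by positivity
    have hkey : (16:ℝ)^(k:ℕ) = 4^(k:ℕ) * 4^(k:ℕ) := by
      rw [← mul_pow]; norm_num
    by_cases hk0 : (k:ℕ) = 0
    · simp only [hk0, Nat.zero_le, if_true, and_self, pow_zero, mul_one, one_mul,
        Nat.cast_mul, Nat.cast_one, ite_true, eq_self_iff_true]
      rw [pow_add]
      field_simp
    · by_cases hki : (k:ℕ) ≤ (i:ℕ) <;> by_cases hkj : (k:ℕ) ≤ (j:ℕ) <;>
        simp only [hki, hkj, hk0, if_true, if_false, and_true, true_and, and_false, false_and,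
          Nat.cast_ite, Nat.cast_zero, Nat.cast_mul, Nat.cast_ofNat, Nat.cast_one,
          ite_true, ite_false, zero_div, mul_zero, zero_mul]
      rw [pow_add]
      field_simp
      simp only [hkey]
      ring
  rw [Matrix.mul_apply]
  rw [Finset.sum_congr rfl (fun k _ => hterm k)]
  rw [← Finset.sum_div]
  rw [Matrix.of_apply]
  congr 1
  rw [Fin.sum_univ_eq_sum_range (fun k =>
    ((if k ≤ (i:ℕ) ∧ k ≤ (j:ℕ)
      then (if k = 0 then 1 else 2) *
        ((2*(i:ℕ)).choose ((i:ℕ)-k) * (2*(j:ℕ)).choose ((j:ℕ)-k)) else 0 : ℕ) : ℝ))]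
  rw [← Nat.cast_sum]
  rw [ha_entry_nat n i j (by omega : (i:ℕ) ≤ n) (by omega : (j:ℕ) ≤ n)]

noncomputable def hat (i j k : ℕ) : ℝ :=
  (-1)^(i-k) * ((i:ℝ)/((i:ℝ)+(k:ℝ))) * ((i+k).choose (2*k) : ℝ) * ((2*k).choose (k-j) : ℝ)

lemma ha_tele (i j : ℕ) (hij : j ≤ i) (m : ℕ) (hm : j ≤ m) : m ≤ i →
    ((i:ℝ)^2 - (j:ℝ)^2) * ∑ k ∈ Icc j m, hat i j k
      = hat i j m * (((i:ℝ) - (m:ℝ)) * ((i:ℝ) + (m:ℝ))) := by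
  induction m, hm using Nat.le_induction with
  | base =>
    intro _
    rw [Finset.Icc_self, Finset.sum_singleton]
    ring
  | succ m hm ih =>
    intro hmi
    have hmi' : m ≤ i := by omega
    rw [Finset.sum_Icc_succ_top (by omega : j ≤ m+1), mul_add, ih hmi']
    obtain ⟨p, rfl⟩ : ∃ p, m = j + p := ⟨m - j, by omega⟩
    obtain ⟨q, rfl⟩ : ∃ q, i = (j+p)+1+q := ⟨i - (j+p) - 1, by omega⟩
    simp only [hat]
    have c1 : (j+p+1+q) - (j+p) = q+1 := by omega
    have c2 : (j+p+1+q) - (j+p+1) = q := by omega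
    have c3 : (j+p) - j = p := by omega
    have c4 : (j+p+1) - j = p+1 := by omega
    have c5 : (j+p+1+q) + (j+p) = 2*j+2*p+q+1 := by omega
    have c6 : (j+p+1+q) + (j+p+1) = 2*j+2*p+q+2 := by omega
    have c7 : 2*(j+p) = 2*j+2*p := by omega
    have c8 : 2*(j+p+1) = 2*j+2*p+2 := by omega
    rw [c1, c2, c3, c4, c5, c6, c7, c8]
    rw [Nat.cast_choose ℝ (by omega : 2*j+2*p ≤ 2*j+2*p+q+1),
        Nat.cast_choose ℝ (by omega : p ≤ 2*j+2*p),
        Nat.cast_choose ℝ (by omega : 2*j+2*p+2 ≤ 2*j+2*p+q+2),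
        Nat.cast_choose ℝ (by omega : p+1 ≤ 2*j+2*p+2)]
    have d1 : (2*j+2*p+q+1) - (2*j+2*p) = q+1 := by omega
    have d2 : (2*j+2*p) - p = 2*j+p := by omega
    have d3 : (2*j+2*p+q+2) - (2*j+2*p+2) = q := by omega
    have d4 : (2*j+2*p+2) - (p+1) = 2*j+p+1 := by omega
    rw [d1, d2, d3, d4]
    have f1 : (Nat.factorial (2*j+2*p+q+2) : ℝ) = (2*j+2*p+q+2) * (Nat.factorial (2*j+2*p+q+1) : ℝ) := by
      rw [show 2*j+2*p+q+2 = (2*j+2*p+q+1)+1 by omega, Nat.factorial_succ]; push_cast; ring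
    have f2 : (Nat.factorial (2*j+2*p+2) : ℝ) = (2*j+2*p+2) * (2*j+2*p+1) * (Nat.factorial (2*j+2*p) : ℝ) := by
      rw [show 2*j+2*p+2 = (2*j+2*p+1)+1 by omega, Nat.factorial_succ,
          show 2*j+2*p+1 = (2*j+2*p)+1 by omega, Nat.factorial_succ]; push_cast; ring
    have f3 : (Nat.factorial (p+1) : ℝ) = (p+1) * (Nat.factorial p : ℝ) := by
      rw [Nat.factorial_succ]; push_cast; ring
    have f4 : (Nat.factorial (2*j+p+1) : ℝ) = (2*j+p+1) * (Nat.factorial (2*j+p) : ℝ) := by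
      rw [show 2*j+p+1 = (2*j+p)+1 by omega, Nat.factorial_succ]; push_cast; ring
    have f5 : (Nat.factorial (q+1) : ℝ) = (q+1) * (Nat.factorial q : ℝ) := by
      rw [Nat.factorial_succ]; push_cast; ring
    rw [f1, f2, f3, f4, f5]
    have g1 : (Nat.factorial (2*j+2*p+q+1) : ℝ) ≠ 0 := Nat.cast_ne_zero.2 (Nat.factorial_ne_zero _)
    have g2 : (Nat.factorial (2*j+2*p) : ℝ) ≠ 0 := Nat.cast_ne_zero.2 (Nat.factorial_ne_zero _)
    have g3 : (Nat.factorial p : ℝ) ≠ 0 := Nat.cast_ne_zero.2 (Nat.factorial_ne_zero _)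
    have g4 : (Nat.factorial (2*j+p) : ℝ) ≠ 0 := Nat.cast_ne_zero.2 (Nat.factorial_ne_zero _)
    have g5 : (Nat.factorial q : ℝ) ≠ 0 := Nat.cast_ne_zero.2 (Nat.factorial_ne_zero _)
    have h1 : ((j:ℝ)+p+1+q) + ((j:ℝ)+p) ≠ 0 := by positivity
    have h2 : ((j:ℝ)+p+1+q) + ((j:ℝ)+p+1) ≠ 0 := by positivity
    have hs : (-1:ℝ)^(q+1) = -(-1:ℝ)^q := by rw [pow_succ]; ring
    push_cast
    rw [hs]
    field_simp
    ring

lemma ha_T_lt (i j : ℕ) (hij : j < i) : ∑ k ∈ Icc j i, hat i j k = 0 := by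
  have h := ha_tele i j hij.le i hij.le le_rfl
  rw [sub_self, zero_mul, mul_zero] at h
  have hji : (j:ℝ) < (i:ℝ) := by exact_mod_cast hij
  have h0 : (0:ℝ) ≤ (j:ℝ) := Nat.cast_nonneg j
  have hne : ((i:ℝ)^2 - (j:ℝ)^2) ≠ 0 := by nlinarith
  exact (mul_eq_zero.mp h).resolve_left hne

lemma ha_T_eq (i : ℕ) (hi : 1 ≤ i) : hat i i i = 1/2 := by
  unfold hat
  have hii : i + i = 2*i := by omega
  rw [Nat.sub_self, pow_zero, hii, Nat.choose_self, Nat.choose_zero_right]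
  have : ((i:ℝ)+(i:ℝ)) ≠ 0 := by
    have : (1:ℝ) ≤ (i:ℝ) := by exact_mod_cast hi
    positivity
  field_simp
  ring

lemma ha_EL (n : ℕ) : haE n * haL n = 1 := by
  ext i j
  rw [Matrix.mul_apply, Matrix.one_apply]
  by_cases hi0 : (i:ℕ) = 0
  · have hi : i = 0 := by exact Fin.ext hi0
    subst hi
    rw [Finset.sum_eq_single (0 : Fin (n+1))]
    · simp only [haE, haL, Matrix.of_apply, Fin.val_zero, if_pos rfl, Nat.le_zero]
      by_cases hj : (j:ℕ) = 0
      · have h0j : (0:Fin (n+1)) = j := Fin.ext hj.symm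
        rw [if_pos hj, if_pos h0j, hj]
        norm_num
      · have h0j : ¬((0:Fin (n+1)) = j) := fun h => hj (congrArg Fin.val h.symm)
        rw [if_neg hj, if_neg h0j]
        ring
    · intro k _ hk
      have : (k:ℕ) ≠ 0 := fun h => hk (Fin.ext h)
      simp only [haE, Matrix.of_apply, Fin.val_zero, if_pos rfl, if_neg this]
      simp
    · intro h
      exact absurd (Finset.mem_univ _) h
  · have hstep : ∀ k : Fin (n+1), haE n i k * haL n k j
        = (if (k:ℕ) ∈ Icc (j:ℕ) (i:ℕ)
            then hat (i:ℕ) (j:ℕ) (k:ℕ) * (2*4^(j:ℕ)/4^(i:ℕ)) else 0) := by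
      intro k
      simp only [haE, haL, Matrix.of_apply, if_neg hi0, Finset.mem_Icc]
      by_cases hki : (k:ℕ) ≤ (i:ℕ) <;> by_cases hjk : (j:ℕ) ≤ (k:ℕ)
      · rw [if_pos hki, if_pos hjk, if_pos ⟨hjk, hki⟩]
        unfold hat
        have h4k : (4:ℝ)^(k:ℕ) ≠ 0 := by positivity
        have h4i : (4:ℝ)^(i:ℕ) ≠ 0 := by positivity
        field_simp
      · rw [if_pos hki, if_neg hjk, mul_zero, if_neg (fun h => hjk h.1)]
      · rw [if_neg hki, zero_mul, if_neg (fun h => hki h.2)]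
      · rw [if_neg hki, zero_mul, if_neg (fun h => hki h.2)]
    rw [Finset.sum_congr rfl (fun k _ => hstep k)]
    rw [Fin.sum_univ_eq_sum_range (fun k => if k ∈ Icc (j:ℕ) (i:ℕ)
          then hat (i:ℕ) (j:ℕ) k * (2*4^(j:ℕ)/4^(i:ℕ)) else 0)]
    rw [Finset.sum_ite_mem]
    have hinter : Finset.range (n+1) ∩ Icc (j:ℕ) (i:ℕ) = Icc (j:ℕ) (i:ℕ) := by
      apply Finset.inter_eq_right.2
      intro x hx
      simp only [Finset.mem_Icc] at hx
      simp only [Finset.mem_range]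
      omega
    rw [hinter, ← Finset.sum_mul]
    by_cases hji : (j:ℕ) ≤ (i:ℕ)
    · rcases eq_or_lt_of_le hji with heq | hlt
      · rw [if_pos (Fin.ext heq.symm : i = j)]
        rw [heq, Finset.Icc_self, Finset.sum_singleton,
          ha_T_eq _ (by omega : 1 ≤ (i:ℕ))]
        have h4i : (4:ℝ)^(i:ℕ) ≠ 0 := by positivity
        field_simp
      · rw [if_neg (by intro h; subst h; omega)]
        rw [ha_T_lt _ _ hlt, zero_mul]
    · rw [if_neg (by intro h; subst h; omega)]
      have : Icc (j:ℕ) (i:ℕ) = ∅ := by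
        apply Finset.Icc_eq_empty; omega
      rw [this, Finset.sum_empty, zero_mul]

lemma ha_DDinv (n : ℕ) : haD n * haDinv n = 1 := by
  rw [haD, haDinv, Matrix.diagonal_mul_diagonal]
  have h1 : ∀ k : Fin (n+1),
      ((if (k:ℕ) = 0 then (1:ℝ) else 2/16^(k:ℕ)) * (if (k:ℕ) = 0 then (1:ℝ) else 16^(k:ℕ)/2))
      = 1 := by
    intro k
    by_cases hk : (k:ℕ) = 0
    · rw [if_pos hk, if_pos hk]; norm_num
    · rw [if_neg hk, if_neg hk]
      have : (16:ℝ)^(k:ℕ) ≠ 0 := by positivity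
      field_simp
  exact (congrArg Matrix.diagonal (funext h1)).trans Matrix.diagonal_one

theorem hankel_ratio_arcsine (n : ℕ) (hn : 1 ≤ n) :
    Matrix.det (Matrix.of fun i j : Fin (n + 1) =>
        ((Nat.choose (2 * (i.1 + j.1)) (i.1 + j.1) : ℝ) / 4 ^ (i.1 + j.1))) /
      Matrix.det (Matrix.of fun i j : Fin n =>
        ((Nat.choose (2 * (i.1 + 1 + (j.1 + 1))) (i.1 + 1 + (j.1 + 1)) : ℝ) /
          4 ^ (i.1 + 1 + (j.1 + 1)))) =
      1 / (2 * (n : ℝ) + 1) := by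
  set M : Matrix (Fin (n+1)) (Fin (n+1)) ℝ := Matrix.of fun i j : Fin (n + 1) =>
    ((Nat.choose (2 * (i.1 + j.1)) (i.1 + j.1) : ℝ) / 4 ^ (i.1 + j.1)) with hM
  set N : Matrix (Fin (n+1)) (Fin (n+1)) ℝ := (haE n)ᵀ * haDinv n * haE n with hN
  have hfact : M = haL n * haD n * (haL n)ᵀ := ha_fact n
  have hLE : haL n * haE n = 1 := mul_eq_one_comm.mp (ha_EL n)
  have hTr : (haL n)ᵀ * (haE n)ᵀ = 1 := by
    rw [← Matrix.transpose_mul, ha_EL, Matrix.transpose_one]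
  have hMN : M * N = 1 := by
    rw [hfact, hN]
    calc haL n * haD n * (haL n)ᵀ * ((haE n)ᵀ * haDinv n * haE n)
        = haL n * (haD n * (((haL n)ᵀ * (haE n)ᵀ) * (haDinv n * haE n))) := by
          simp only [Matrix.mul_assoc]
      _ = haL n * (haD n * (haDinv n * haE n)) := by rw [hTr, Matrix.one_mul]
      _ = haL n * ((haD n * haDinv n) * haE n) := by rw [Matrix.mul_assoc]
      _ = haL n * haE n := by rw [ha_DDinv, Matrix.one_mul]
      _ = 1 := hLE
  have hNM : N * M = 1 := mul_eq_one_comm.mp hMN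
  have hdet : M.det ≠ 0 := (Matrix.isUnit_det_of_right_inverse hMN).ne_zero
  have hadj : M.adjugate = M.det • N := by
    calc M.adjugate = (N * M) * M.adjugate := by rw [hNM, Matrix.one_mul]
      _ = N * (M * M.adjugate) := by rw [Matrix.mul_assoc]
      _ = N * (M.det • 1) := by rw [Matrix.mul_adjugate]
      _ = M.det • N := by rw [Matrix.mul_smul, Matrix.mul_one]
  -- minor identification
  have hsub : (Matrix.of fun i j : Fin n =>
        ((Nat.choose (2 * (i.1 + 1 + (j.1 + 1))) (i.1 + 1 + (j.1 + 1)) : ℝ) /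
          4 ^ (i.1 + 1 + (j.1 + 1)))) = M.submatrix Fin.succ Fin.succ := by
    ext i j
    simp only [hM, Matrix.submatrix_apply, Matrix.of_apply, Fin.val_succ]
  have hdetG : Matrix.det (Matrix.of fun i j : Fin n =>
        ((Nat.choose (2 * (i.1 + 1 + (j.1 + 1))) (i.1 + 1 + (j.1 + 1)) : ℝ) /
          4 ^ (i.1 + 1 + (j.1 + 1)))) = M.adjugate 0 0 := by
    rw [hsub, Matrix.adjugate_apply, Matrix.det_succ_row_zero]
    rw [Finset.sum_eq_single (0 : Fin (n+1))]
    · simp only [Matrix.updateRow_self, Fin.val_zero, pow_zero, one_mul, Pi.single_eq_same]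
      rw [Fin.succAbove_zero]
      have : (M.updateRow 0 (Pi.single 0 1)).submatrix Fin.succ Fin.succ
          = M.submatrix Fin.succ Fin.succ := by
        ext a b
        simp [Matrix.updateRow_apply, (Fin.succ_ne_zero a)]
      rw [this]
    · intro k _ hk
      simp only [Matrix.updateRow_self]
      rw [Pi.single_eq_of_ne hk, mul_zero, zero_mul]
    · intro h; exact absurd (Finset.mem_univ _) h
  -- N 0 0 = 2n+1
  have hterm : ∀ k : Fin (n+1), ((haE n)ᵀ * haDinv n) 0 k * haE n k 0
      = (if (k:ℕ) = 0 then (1:ℝ) else 2) := by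
    intro k
    rw [haDinv, Matrix.mul_diagonal, Matrix.transpose_apply]
    simp only [haE, Matrix.of_apply, Fin.val_zero]
    by_cases hk : (k:ℕ) = 0
    · simp [hk]
    · simp only [if_neg hk, if_pos (Nat.zero_le ((k:ℕ)))]
      have hkR : ((k:ℕ):ℝ) ≠ 0 := Nat.cast_ne_zero.2 hk
      have h4 : (4:ℝ)^(k:ℕ) ≠ 0 := by positivity
      have h16 : (16:ℝ)^(k:ℕ) = 4^(k:ℕ) * 4^(k:ℕ) := by rw [← mul_pow]; norm_num
      have hm1 : (-1:ℝ)^((k:ℕ)) * (-1:ℝ)^((k:ℕ)) = 1 := by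
        rw [← mul_pow]; norm_num
      simp only [Nat.sub_zero, Nat.cast_zero, add_zero, Nat.mul_zero, Nat.add_zero,
        Nat.choose_zero_right, Nat.cast_one, pow_zero, mul_one, one_mul]
      rw [div_self hkR]
      field_simp
      rw [h16]
      ring_nf
      have hone : (-1:ℝ)^((k:ℕ)*2) = 1 := by rw [pow_mul, pow_two, hm1]
      rw [if_pos (Nat.zero_le _)]
      have h44 : (4:ℝ)⁻¹ ^ ((k:ℕ)*2) * 4^((k:ℕ)*2) = 1 := by
        rw [← mul_pow, inv_mul_cancel₀ (by norm_num), one_pow]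
      rw [mul_pow, mul_pow, ← pow_mul, ← pow_mul, hone]
      linear_combination 4 * h44
  have hN00 : N 0 0 = 2*(n:ℝ)+1 := by
    rw [hN, Matrix.mul_apply]
    rw [Finset.sum_congr rfl (fun k _ => hterm k)]
    rw [Fin.sum_univ_eq_sum_range (fun k => (if k = 0 then (1:ℝ) else 2))]
    rw [Finset.sum_range_succ']
    simp only [if_pos rfl, if_neg (Nat.succ_ne_zero _)]
    rw [Finset.sum_const, Finset.card_range]
    push_cast
    ring
  rw [hdetG, hadj, Matrix.smul_apply, hN00, smul_eq_mul]
  have h2n : (2*(n:ℝ)+1) ≠ 0 := by positivity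
  field_simp
end

section
/- Let C be a symmetric positive definite (n+1)×(n+1) real matrix, e_0 the first standard basis vector, and 0 < γ < 1. Let C̃ = γ e_0 e_0^T + (1-γ) C. Then C̃ is invertible and 1/(e_0^T C̃^{-1} e_0) = γ + (1-γ)/(e_0^T C^{-1} e_0). -/
theorem rank_one_update_quadratic (n : ℕ) (C : Matrix (Fin (n + 1)) (Fin (n + 1)) ℝ)
    (hC : C.PosDef) (γ : ℝ) (hγ0 : 0 < γ) (hγ1 : γ < 1)
    (Ct : Matrix (Fin (n + 1)) (Fin (n + 1)) ℝ)
    (hCt : Ct = γ • Matrix.vecMulVec (Pi.single (0 : Fin (n + 1)) (1 : ℝ))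
        (Pi.single (0 : Fin (n + 1)) (1 : ℝ)) + (1 - γ) • C) :
    IsUnit Ct.det ∧ 0 < C⁻¹ 0 0 ∧
      1 / (Ct⁻¹ 0 0) = γ + (1 - γ) / (C⁻¹ 0 0) := by
  have h1γ : (0:ℝ) < 1 - γ := by linarith
  set u : Fin (n+1) → ℝ := Pi.single 0 1 with hu
  set E : Matrix (Fin (n+1)) (Fin (n+1)) ℝ := Matrix.vecMulVec u u with hE
  -- entrywise multiplication lemmas for E
  have hl : ∀ X : Matrix (Fin (n+1)) (Fin (n+1)) ℝ,
      E * X = Matrix.of (fun i j => u i * X 0 j) := by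
    intro X; ext i j
    simp [hE, Matrix.mul_apply, Matrix.vecMulVec_apply, hu, Pi.single_apply,
      mul_assoc, ite_mul, Finset.sum_ite_eq]
  have hr : ∀ X : Matrix (Fin (n+1)) (Fin (n+1)) ℝ,
      X * E = Matrix.of (fun i j => X i 0 * u j) := by
    intro X; ext i j
    simp [hE, Matrix.mul_apply, Matrix.vecMulVec_apply, hu, Pi.single_apply,
      mul_ite, mul_comm, mul_assoc, Finset.sum_ite_eq]
  -- dot product with u extracts the (0,0) entry
  have hdot : ∀ X : Matrix (Fin (n+1)) (Fin (n+1)) ℝ,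
      dotProduct (star u) (X.mulVec u) = X 0 0 := by
    intro X
    simp [dotProduct, Matrix.mulVec, hu, Pi.single_apply, mul_ite, ite_mul,
      Finset.sum_ite_eq, Finset.sum_ite_eq']
  have hu0 : u ≠ 0 := by
    intro h
    have := congrFun h 0
    simp [hu] at this
  -- positive definiteness of Ct
  have hEps : E.PosSemidef := by
    refine Matrix.PosSemidef.of_dotProduct_mulVec_nonneg ?_ ?_
    · ext i j
      simp [hE, Matrix.vecMulVec_apply, mul_comm]
    · intro x
      have : dotProduct (star x) (E.mulVec x) = (x 0) ^ 2 := by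
        simp [hE, dotProduct, Matrix.mulVec, Matrix.vecMulVec_apply, hu,
          Pi.single_apply, mul_ite, ite_mul, Finset.sum_ite_eq, Finset.sum_ite_eq', sq,
          Finset.mul_sum, Finset.sum_mul, mul_comm]
      rw [this]; positivity
  have hA : ((1 - γ) • C).PosDef := by
    refine Matrix.PosDef.of_dotProduct_mulVec_pos ?_ ?_
    · unfold Matrix.IsHermitian
      ext i j
      have := congrFun (congrFun hC.isHermitian i) j
      simp only [Matrix.conjTranspose_apply, Matrix.smul_apply, star, id] at this ⊢
      simp [this]
    · intro x hx
      have := hC.dotProduct_mulVec_pos hx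
      simp only [Matrix.smul_mulVec, dotProduct_smul]
      exact smul_pos h1γ this
  have hCtpd : Ct.PosDef := by
    rw [hCt]
    have hsm : (γ • E).PosSemidef := by
      refine Matrix.PosSemidef.of_dotProduct_mulVec_nonneg ?_ ?_
      · unfold Matrix.IsHermitian
        ext i j
        have := congrFun (congrFun hEps.1 i) j
        simp only [Matrix.conjTranspose_apply, Matrix.smul_apply, star, id] at this ⊢
        simp [this]
      · intro x
        simp only [Matrix.smul_mulVec, dotProduct_smul]
        exact smul_nonneg hγ0.le (hEps.dotProduct_mulVec_nonneg x)
    exact Matrix.PosDef.posSemidef_add hsm hA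
  have hdetCt : IsUnit Ct.det := hCtpd.det_pos.ne'.isUnit
  -- inverse quantities
  set A : Matrix (Fin (n+1)) (Fin (n+1)) ℝ := (1 - γ) • C with hAdef
  have hAB : A * A⁻¹ = 1 := Matrix.mul_nonsing_inv A hA.det_pos.ne'.isUnit
  set B : Matrix (Fin (n+1)) (Fin (n+1)) ℝ := A⁻¹ with hBdef
  set a : ℝ := B 0 0 with ha
  have hapos : 0 < a := by
    have := hA.inv.dotProduct_mulVec_pos hu0
    rwa [hdot B] at this
  have hbpos : 0 < C⁻¹ 0 0 := by
    have := hC.inv.dotProduct_mulVec_pos hu0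
    rwa [hdot _] at this
  set b : ℝ := C⁻¹ 0 0 with hb
  have hab : a = (1 - γ)⁻¹ * b := by
    haveI := invertibleOfNonzero h1γ.ne'
    rw [ha, hBdef, hAdef, Matrix.inv_smul C (1-γ) hC.det_pos.ne'.isUnit]
    simp [invOf_eq_inv, hb]
  set d : ℝ := 1 + γ * a with hdd
  have hdpos : (0:ℝ) < d := by rw [hdd]; positivity
  set c : ℝ := γ / d with hc
  set M : Matrix (Fin (n+1)) (Fin (n+1)) ℝ := B - c • (B * E * B) with hMdef
  have hEBE : E * B * E = a • E := by
    rw [hl B, hr _]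
    ext i j
    simp [hE, Matrix.vecMulVec_apply, ha]
    ring
  have h1 : A * (B * E * B) = E * B := by
    rw [← Matrix.mul_assoc, ← Matrix.mul_assoc, hAB, Matrix.one_mul]
  have h2 : E * (B * E * B) = a • (E * B) := by
    calc E * (B * E * B) = (E * B * E) * B := by simp [Matrix.mul_assoc]
    _ = (a • E) * B := by rw [hEBE]
    _ = a • (E * B) := Matrix.smul_mul a E B
  have hkey : Ct * M = 1 := by
    have hCt' : Ct = γ • E + A := by rw [hCt]
    have expand : (γ • E + A) * (B - c • (B * E * B))
        = γ • (E * B) + A * B - (c * γ) • (E * (B * E * B)) - c • (A * (B * E * B)) := by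
      simp only [Matrix.mul_sub, Matrix.add_mul, Matrix.smul_mul, Matrix.mul_smul,
        smul_add, smul_smul]
      abel
    rw [hCt', hMdef, expand, hAB, h1, h2, smul_smul]
    have hcoef : c * γ * a = γ - c := by
      rw [hc]; field_simp; ring
    rw [hcoef]
    have hz : γ • (E * B) - (γ - c) • (E * B) - c • (E * B) = 0 := by
      rw [← sub_smul, ← sub_smul]
      simp
    calc γ • (E * B) + 1 - (γ - c) • (E * B) - c • (E * B)
        = 1 + (γ • (E * B) - (γ - c) • (E * B) - c • (E * B)) := by abel
    _ = 1 := by rw [hz, add_zero]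
  have hCtinv : Ct⁻¹ = M := Matrix.inv_eq_right_inv hkey
  have hBEB : (B * E * B) 0 0 = a * a := by
    rw [Matrix.mul_assoc, hl B, Matrix.mul_apply]
    simp [hu, Pi.single_apply, mul_ite, ite_mul, Finset.sum_ite_eq, ha]
  have hCt00 : Ct⁻¹ 0 0 = a / d := by
    rw [hCtinv, hMdef]
    simp only [Matrix.sub_apply, Matrix.smul_apply, hBEB, smul_eq_mul, ← ha, hc]
    field_simp
    ring
  refine ⟨hdetCt, hbpos, ?_⟩
  rw [hCt00, hdd, hab]
  have hb0 : b ≠ 0 := hbpos.ne'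
  field_simp
  ring
end
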